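/- Let c ∈ (−1,0) and put ψ := h_c, where h_a(z) := (z − a)/(1 − conj(a)·z). For every a ∈ E \ ℝ, the automorphism φ of E determined by φ(a) = ψ(a) and φ(ψ(a)) = a satisfies φ'(a) ≠ ψ'(a) and φ'(a) ≠ −ψ'(a). -/

import Mathlib

open Set Metric Complex

noncomputable section

/-- The open unit disc `E` in `ℂ`. -/
def unitDisc : Set ℂ := Metric.ball (0 : ℂ) 1

/-- The Kobayashi–Royden pseudometric of a set `D` in a complex normed space:
`κ_D(z;X) = inf {|α| : ∃ holomorphic f : E → D, f(0) = z, α·f'(0) = X}`. -/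
def kobayashi {V : Type*} [NormedAddCommGroup V] [NormedSpace ℂ V]
    (D : Set V) (z X : V) : ℝ :=
  sInf {r : ℝ | ∃ (α : ℂ) (f : ℂ → V), ‖α‖ = r ∧
    DifferentiableOn ℂ f unitDisc ∧ MapsTo f unitDisc D ∧
    f 0 = z ∧ α • deriv f 0 = X}

/-- The Hahn pseudometric of a set `D` in a complex normed space:
`h_D(z;X) = inf {|α| : ∃ injective holomorphic f : E → D, f(0) = z, α·f'(0) = X}`. -/
def hahn {V : Type*} [NormedAddCommGroup V] [NormedSpace ℂ V]
    (D : Set V) (z X : V) : ℝ :=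
  sInf {r : ℝ | ∃ (α : ℂ) (f : ℂ → V), ‖α‖ = r ∧
    DifferentiableOn ℂ f unitDisc ∧ MapsTo f unitDisc D ∧ InjOn f unitDisc ∧
    f 0 = z ∧ α • deriv f 0 = X}

/-- An automorphism of the unit disc: a biholomorphic map of `E` onto itself. -/
def IsDiscAut (φ : ℂ → ℂ) : Prop :=
  DifferentiableOn ℂ φ unitDisc ∧ MapsTo φ unitDisc unitDisc ∧
  ∃ ψ : ℂ → ℂ, DifferentiableOn ℂ ψ unitDisc ∧ MapsTo ψ unitDisc unitDisc ∧
    (∀ z ∈ unitDisc, ψ (φ z) = z) ∧ (∀ z ∈ unitDisc, φ (ψ z) = z)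

/-- The Möbius automorphism `h_a(z) = (z - a)/(1 - conj(a)·z)` of the unit disc. -/
def hMob (a z : ℂ) : ℂ := (z - a) / (1 - (starRingEnd ℂ) a * z)

/-!
By the Schwarz lemma, an automorphism `φ` of `E` with `φ(a) = w` satisfies `h_w ∘ φ = l · h_a`
for a constant `l`, so `φ'(a) = l (1 - |w|²) / (1 - |a|²)`, and `φ(w) = a` pins down `l`.
For `w = h_c(a)` this yields `φ'(a) (A + D) = (D - A) ψ'(a)` with `A = 1 - |a|² > 0` and
`D = c (a - conj a) = 2ic · Im a ≠ 0`; hence `φ'(a) = ψ'(a)` would force `A = 0`, and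
`φ'(a) = -ψ'(a)` would force `D = 0`.
-/

open ComplexConjugate Topology

lemma mem_unitDisc {z : ℂ} : z ∈ unitDisc ↔ ‖z‖ < 1 := mem_ball_zero_iff

lemma one_sub_conj_mul_ne_zero {b z : ℂ} (hb : b ∈ unitDisc) (hz : z ∈ unitDisc) :
    1 - conj b * z ≠ 0 := by
  rw [mem_unitDisc] at hb hz
  have : ‖conj b * z‖ < 1 := by
    rw [norm_mul, Complex.norm_conj]
    exact mul_lt_one_of_nonneg_of_lt_one_left (norm_nonneg _) hb hz.le
  intro h
  rw [← eq_of_sub_eq_zero h, norm_one] at this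
  exact lt_irrefl _ this

lemma normSq_one_sub_conj_mul_sub_normSq_sub (b z : ℂ) :
    normSq (1 - conj b * z) - normSq (z - b) = (1 - normSq b) * (1 - normSq z) := by
  simp only [normSq_apply, sub_re, sub_im, mul_re, mul_im, one_re, one_im, conj_re, conj_im]
  ring

lemma hMob_mapsTo {b : ℂ} (hb : b ∈ unitDisc) : MapsTo (hMob b) unitDisc unitDisc := by
  intro z hz
  have hden := one_sub_conj_mul_ne_zero hb hz
  rw [mem_unitDisc, ← sq_lt_one_iff₀ (norm_nonneg _), ← normSq_eq_norm_sq, hMob, normSq_div,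
    div_lt_one (normSq_pos.2 hden), ← sub_pos, normSq_one_sub_conj_mul_sub_normSq_sub]
  rw [mem_unitDisc, ← sq_lt_one_iff₀ (norm_nonneg _), ← normSq_eq_norm_sq] at hb hz
  exact mul_pos (sub_pos.2 hb) (sub_pos.2 hz)

lemma hasDerivAt_hMob {b z : ℂ} (h : 1 - conj b * z ≠ 0) :
    HasDerivAt (hMob b) ((1 - conj b * b) / (1 - conj b * z) ^ 2) z := by
  have hnum : HasDerivAt (fun w => w - b) 1 z := (hasDerivAt_id z).sub_const b
  have hden : HasDerivAt (fun w => 1 - conj b * w) (-conj b) z := by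
    simpa using ((hasDerivAt_id z).const_mul (conj b)).const_sub 1
  exact (hnum.div hden h).congr_deriv (by ring)

lemma hMob_differentiableOn {b : ℂ} (hb : b ∈ unitDisc) :
    DifferentiableOn ℂ (hMob b) unitDisc := fun _ hz =>
  (hasDerivAt_hMob (one_sub_conj_mul_ne_zero hb hz)).differentiableAt.differentiableWithinAt

lemma hMob_neg_hMob {b z : ℂ} (hb : b ∈ unitDisc) (hz : z ∈ unitDisc) :
    hMob (-b) (hMob b z) = z := by
  have h₁ := one_sub_conj_mul_ne_zero hb hz
  have h₂ := one_sub_conj_mul_ne_zero hb hb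
  have hnum : hMob b z - -b = z * (1 - conj b * b) / (1 - conj b * z) := by
    rw [hMob, eq_div_iff h₁, sub_mul, div_mul_cancel₀ _ h₁]
    ring
  have hden : 1 - conj (-b) * hMob b z = (1 - conj b * b) / (1 - conj b * z) := by
    rw [hMob, eq_div_iff h₁, map_neg, sub_mul, one_mul, neg_mul, neg_mul, mul_assoc,
      div_mul_cancel₀ _ h₁]
    ring
  rw [hMob, hnum, hden, div_div_div_cancel_right₀ h₁, mul_div_cancel_right₀ _ h₂]

lemma hMob_self (b : ℂ) : hMob b b = 0 := by simp [hMob]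

lemma hMob_neg_zero (b : ℂ) : hMob (-b) 0 = b := by simp [hMob]

lemma neg_mem_unitDisc {z : ℂ} (hz : z ∈ unitDisc) : -z ∈ unitDisc := by
  rwa [mem_unitDisc, norm_neg, ← mem_unitDisc]

lemma zero_mem_unitDisc : (0 : ℂ) ∈ unitDisc := mem_unitDisc.2 (by simp)

/-- Equality case of the Schwarz lemma: `|f'(0)| = 1` because `g'(0) f'(0) = 1`. -/
lemma eqOn_deriv_mul_of_leftInvOn {f g : ℂ → ℂ} (hf : DifferentiableOn ℂ f unitDisc)
    (hfE : MapsTo f unitDisc unitDisc) (hg : DifferentiableOn ℂ g unitDisc)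
    (hgE : MapsTo g unitDisc unitDisc) (hf0 : f 0 = 0) (hgf : LeftInvOn g f unitDisc) :
    EqOn f (fun z => deriv f 0 * z) unitDisc := by
  have hnhds : unitDisc ∈ 𝓝 (0 : ℂ) := isOpen_ball.mem_nhds zero_mem_unitDisc
  have hg0 : g 0 = 0 := by simpa [hf0] using hgf zero_mem_unitDisc
  have hfE' : MapsTo f (ball 0 1) (closedBall (f 0) 1) := by
    rw [hf0]; exact hfE.mono_right ball_subset_closedBall
  have hgE' : MapsTo g (ball 0 1) (closedBall (g 0) 1) := by
    rw [hg0]; exact hgE.mono_right ball_subset_closedBall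
  have hchain : deriv g 0 * deriv f 0 = 1 := by
    have hid : g ∘ f =ᶠ[𝓝 0] id := Filter.eventually_of_mem hnhds hgf
    have hgd : DifferentiableAt ℂ g (f 0) := by rw [hf0]; exact hg.differentiableAt hnhds
    have hcomp := deriv_comp 0 hgd (hf.differentiableAt hnhds)
    rw [hf0] at hcomp
    rw [← hcomp, hid.deriv_eq, deriv_id]
  have hf' := norm_deriv_le_one_of_mapsTo_ball hf hfE' one_pos
  have hg' := norm_deriv_le_one_of_mapsTo_ball hg hgE' one_pos
  have hnorm : ‖dslope f 0 0‖ = 1 / 1 := by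
    have := congrArg norm hchain
    rw [norm_mul, norm_one] at this
    rw [dslope_same, div_one]
    nlinarith [norm_nonneg (deriv f 0), norm_nonneg (deriv g 0)]
  intro z hz
  rw [affine_of_mapsTo_ball_of_norm_dslope_eq_div hf hfE' zero_mem_unitDisc hnorm hz, hf0,
    dslope_same]
  simp [mul_comm]

lemma IsDiscAut.exists_hMob_comp_eq_mul_hMob {φ : ℂ → ℂ} (hφ : IsDiscAut φ) {a : ℂ}
    (ha : a ∈ unitDisc) : ∃ l : ℂ, ∀ z ∈ unitDisc, hMob (φ a) (φ z) = l * hMob a z := by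
  obtain ⟨hφd, hφE, ψ, hψd, hψE, hψφ, -⟩ := hφ
  have hb : φ a ∈ unitDisc := hφE ha
  set f := hMob (φ a) ∘ φ ∘ hMob (-a)
  set g := hMob a ∘ ψ ∘ hMob (-φ a)
  have hfE : MapsTo f unitDisc unitDisc :=
    (hMob_mapsTo hb).comp (hφE.comp (hMob_mapsTo (neg_mem_unitDisc ha)))
  have hgE : MapsTo g unitDisc unitDisc :=
    (hMob_mapsTo ha).comp (hψE.comp (hMob_mapsTo (neg_mem_unitDisc hb)))
  have hf : DifferentiableOn ℂ f unitDisc :=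
    (hMob_differentiableOn hb).comp (hφd.comp (hMob_differentiableOn (neg_mem_unitDisc ha))
      (hMob_mapsTo (neg_mem_unitDisc ha))) (hφE.comp (hMob_mapsTo (neg_mem_unitDisc ha)))
  have hg : DifferentiableOn ℂ g unitDisc :=
    (hMob_differentiableOn ha).comp (hψd.comp (hMob_differentiableOn (neg_mem_unitDisc hb))
      (hMob_mapsTo (neg_mem_unitDisc hb))) (hψE.comp (hMob_mapsTo (neg_mem_unitDisc hb)))
  have hf0 : f 0 = 0 := by simp [f, hMob_neg_zero, hMob_self]
  have hgf : LeftInvOn g f unitDisc := fun z hz => by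
    have hz' := hMob_mapsTo (neg_mem_unitDisc ha) hz
    simpa [f, g, hMob_neg_hMob hb (hφE hz'), hψφ _ hz'] using
      hMob_neg_hMob (neg_mem_unitDisc ha) hz
  refine ⟨deriv f 0, fun z hz => ?_⟩
  have := eqOn_deriv_mul_of_leftInvOn hf hfE hg hgE hf0 hgf (hMob_mapsTo ha hz)
  simpa [f, hMob_neg_hMob ha hz] using this

lemma deriv_eq_of_hMob_comp_eq_mul_hMob {φ : ℂ → ℂ} {a l : ℂ} (ha : a ∈ unitDisc)
    (hb : φ a ∈ unitDisc) (hφ : DifferentiableAt ℂ φ a)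
    (hl : ∀ z ∈ unitDisc, hMob (φ a) (φ z) = l * hMob a z) :
    deriv φ a = l * (1 - conj (φ a) * φ a) / (1 - conj a * a) := by
  have hA := one_sub_conj_mul_ne_zero ha ha
  have hB := one_sub_conj_mul_ne_zero hb hb
  have hlhs := (hasDerivAt_hMob hB).comp a hφ.hasDerivAt
  have hrhs := (hasDerivAt_hMob hA).const_mul l
  have heq : hMob (φ a) ∘ φ =ᶠ[𝓝 a] fun z => l * hMob a z :=
    Filter.eventually_of_mem (isOpen_ball.mem_nhds ha) hl
  have := (hlhs.congr_of_eventuallyEq heq.symm).unique hrhs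
  field_simp at this
  field_simp
  linear_combination this

lemma hMob_ofReal (c : ℝ) (z : ℂ) : hMob c z = (z - c) / (1 - c * z) := by
  rw [hMob, conj_ofReal]

/-- Here `l = -(A - D)(1 - c conj a) / ((A + D)(1 - c a))` with `A = 1 - |a|²`,
`D = c (a - conj a)`, and `1 - |h_c(a)|² = (1 - c²) A / |1 - c a|²`. -/
lemma mul_add_eq_sub_mul_of_mul_hMob_hMob_ofReal {c : ℝ} (hc0 : c ≠ 0) (hc : (c : ℂ) ∈ unitDisc) {a l : ℂ}
    (ha : a ∈ unitDisc) (hl : l * hMob a (hMob c a) = hMob (hMob c a) a) :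
    l * (1 - conj (hMob c a) * hMob c a) / (1 - conj a * a) *
        ((1 - conj a * a) + c * (a - conj a)) =
      (c * (a - conj a) - (1 - conj a * a)) * ((1 - c * c) / (1 - c * a) ^ 2) := by
  have hca : 1 - c * a ≠ 0 := by simpa using one_sub_conj_mul_ne_zero hc ha
  have hconj : conj a ∈ unitDisc := by rwa [mem_unitDisc, norm_conj, ← mem_unitDisc]
  have hcb : 1 - conj a * c ≠ 0 := by
    rw [mul_comm]
    simpa using one_sub_conj_mul_ne_zero hc hconj
  have hw : hMob c a ∈ unitDisc := hMob_mapsTo hc ha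
  have hwa : hMob c a - a ≠ 0 := by
    have haa : 1 - a * a ≠ 0 := by simpa using one_sub_conj_mul_ne_zero hconj ha
    rw [hMob_ofReal, div_sub' hca]
    refine div_ne_zero ?_ hca
    convert neg_ne_zero.2 (mul_ne_zero (ofReal_ne_zero.2 hc0) haa) using 1
    ring
  set w := hMob c a with hwdef
  have hl' : l * (1 - conj w * a) = -(1 - conj a * w) := by
    rw [hMob, hMob, mul_div_assoc', div_eq_div_iff (one_sub_conj_mul_ne_zero ha hw)
      (one_sub_conj_mul_ne_zero hw ha)] at hl
    refine mul_left_cancel₀ hwa ?_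
    linear_combination hl
  have hA := one_sub_conj_mul_ne_zero ha ha
  rw [hwdef, hMob_ofReal] at hl' ⊢
  simp only [map_div₀, map_sub, map_mul, conj_ofReal, map_one] at hl' ⊢
  field_simp at hl' ⊢
  linear_combination (1 - (c : ℂ) ^ 2) * (1 - conj a * a) * hl'

/-- For `c ∈ (-1,0)`, `ψ := h_c`, and `a ∈ E \\ ℝ`, any automorphism `φ` of `E` with
`φ(a) = ψ(a)` and `φ(ψ(a)) = a` satisfies `φ'(a) ≠ ψ'(a)` and `φ'(a) ≠ -ψ'(a)`. -/
theorem stmt16 (c : ℝ) (hc : c ∈ Set.Ioo (-1 : ℝ) 0) (a : ℂ) (ha : a ∈ unitDisc)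
    (haR : a.im ≠ 0) (φ : ℂ → ℂ) (hφ : IsDiscAut φ)
    (hval₁ : φ a = hMob (c : ℂ) a) (hval₂ : φ (hMob (c : ℂ) a) = a) :
    deriv φ a ≠ deriv (hMob (c : ℂ)) a ∧ deriv φ a ≠ -deriv (hMob (c : ℂ)) a := by
  have hc' : (c : ℂ) ∈ unitDisc := by
    rw [mem_unitDisc, norm_real, Real.norm_eq_abs, abs_lt]
    exact ⟨hc.1, hc.2.trans zero_lt_one⟩
  obtain ⟨l, hl⟩ := hφ.exists_hMob_comp_eq_mul_hMob ha
  have hlw : l * hMob a (hMob c a) = hMob (hMob c a) a := by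
    have := hl _ (hMob_mapsTo hc' ha)
    rw [hval₁, hval₂] at this
    exact this.symm
  have hψ : deriv (hMob c) a = (1 - c * c) / (1 - c * a) ^ 2 := by
    rw [(hasDerivAt_hMob (one_sub_conj_mul_ne_zero hc' ha)).deriv, conj_ofReal]
  have hψ0 : deriv (hMob c) a ≠ 0 := by
    rw [hψ]
    simpa [conj_ofReal] using div_ne_zero (one_sub_conj_mul_ne_zero hc' hc')
      (pow_ne_zero 2 (one_sub_conj_mul_ne_zero hc' ha))
  have hA := one_sub_conj_mul_ne_zero ha ha
  have hD : (c : ℂ) * (a - conj a) ≠ 0 := by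
    rw [sub_conj]
    exact mul_ne_zero (ofReal_ne_zero.2 hc.2.ne) (by simp [haR])
  have key := mul_add_eq_sub_mul_of_mul_hMob_hMob_ofReal hc.2.ne hc' ha hlw
  rw [← hval₁, ← deriv_eq_of_hMob_comp_eq_mul_hMob ha (hφ.2.1 ha)
    (hφ.1.differentiableAt (isOpen_ball.mem_nhds ha)) hl, ← hψ] at key
  constructor
  · intro h
    rw [h, mul_comm] at key
    exact hA (by linear_combination (mul_right_cancel₀ hψ0 key) / 2)
  · intro h
    rw [h, neg_mul, ← mul_neg, mul_comm] at key
    exact hD (by linear_combination -(mul_right_cancel₀ hψ0 key) / 2)
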